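/- arXiv:2103.01539 — 3 statements merged into one kernel-verified Lean document; each statement's English description precedes it below -/
import Mathlib

section
/- Let A_1,...,A_d be complex numbers with |A_j| ≤ 1 for all j and ∑_{j=1}^d A_j = 0, and let J ⊆ {1,...,d} be nonempty. Define ΔA := (1/d)∑_{j=1}^d |A_j|² and ΔA_J := (1/|J|)∑_{j∈J}|A_j|² - (1/|J|²)|∑_{j∈J}A_j|². Then |ΔA_J - ΔA| ≤ (1/|J| - 1/d)·|J| + (d - |J|)²/|J|² + (d - |J|)/d. -/
/-!
Write `k = |J|`, `S = ∑_{j∈J} |A_j|²`, `T = ∑_j |A_j|²` and `N = |∑_{j∈J} A_j|²`. Then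
`ΔA_J - ΔA = (1/k - 1/d) S - N / k² - (T - S) / d`, a difference of three nonnegative terms.
Since `|A_j| ≤ 1` we have `S ≤ k` and `T - S ≤ d - k`, and tracelessness gives
`∑_{j∈J} A_j = -∑_{j∉J} A_j`, so `N ≤ (d - k)²`.
-/

open Finset

theorem abs_sub_sub_le_add_add {a b c A B C : ℝ} (ha : a ∈ Set.Icc 0 A) (hb : b ∈ Set.Icc 0 B)
    (hc : c ∈ Set.Icc 0 C) : |a - b - c| ≤ A + B + C := by
  obtain ⟨ha₀, ha₁⟩ := ha
  obtain ⟨hb₀, hb₁⟩ := hb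
  obtain ⟨hc₀, hc₁⟩ := hc
  rw [abs_le]
  constructor <;> linarith

section

variable {ι E : Type*} [SeminormedAddCommGroup E] {f : ι → E}

theorem Finset.sum_norm_sq_le_card {s : Finset ι} (hf : ∀ i, ‖f i‖ ≤ 1) :
    ∑ i ∈ s, ‖f i‖ ^ 2 ≤ s.card := by
  simpa using s.sum_le_card_nsmul _ 1 fun i _ ↦ pow_le_one₀ (norm_nonneg _) (hf i)

variable [Fintype ι] [DecidableEq ι]

theorem Finset.cast_card_compl (s : Finset ι) :
    (sᶜ.card : ℝ) = Fintype.card ι - s.card := by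
  rw [card_compl, Nat.cast_sub s.card_le_univ]

theorem norm_sum_le_card_compl_of_sum_eq_zero (hf : ∀ i, ‖f i‖ ≤ 1) (h₀ : ∑ i, f i = 0)
    (s : Finset ι) : ‖∑ i ∈ s, f i‖ ≤ sᶜ.card := by
  have hs : ∑ i ∈ s, f i = -∑ i ∈ sᶜ, f i :=
    eq_neg_of_add_eq_zero_left ((s.sum_add_sum_compl f).trans h₀)
  calc ‖∑ i ∈ s, f i‖ ≤ ∑ i ∈ sᶜ, ‖f i‖ := by rw [hs, norm_neg]; exact norm_sum_le _ _
    _ ≤ sᶜ.card := by simpa using sᶜ.sum_le_card_nsmul _ 1 fun i _ ↦ hf i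

end

/-- Quantitative comparison of the microcanonical EEV variance `ΔA_J` with the full
variance `ΔA` for traceless `A` with `|A_j| ≤ 1`. -/
theorem stmt_1 (d : ℕ) (A : Fin d → ℂ) (hA : ∀ j, ‖A j‖ ≤ 1)
    (htr : ∑ j, A j = 0) (J : Finset (Fin d)) (hJ : J.Nonempty) :
    |((1 / (J.card : ℝ)) * ∑ j ∈ J, ‖A j‖ ^ 2
        - (1 / (J.card : ℝ) ^ 2) * ‖∑ j ∈ J, A j‖ ^ 2)
      - (1 / (d : ℝ)) * ∑ j, ‖A j‖ ^ 2|
      ≤ (1 / (J.card : ℝ) - 1 / (d : ℝ)) * J.card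
        + ((d : ℝ) - J.card) ^ 2 / (J.card : ℝ) ^ 2
        + ((d : ℝ) - J.card) / (d : ℝ) := by
  have hk : (0 : ℝ) < J.card := by exact_mod_cast hJ.card_pos
  have hkd : (J.card : ℝ) ≤ d := by exact_mod_cast J.card_le_univ.trans_eq (Fintype.card_fin d)
  have hcompl : (Jᶜ.card : ℝ) = d - J.card := by rw [J.cast_card_compl, Fintype.card_fin]
  have hS := J.sum_norm_sq_le_card hA
  have hTS : ∑ j, ‖A j‖ ^ 2 - ∑ j ∈ J, ‖A j‖ ^ 2 = ∑ j ∈ Jᶜ, ‖A j‖ ^ 2 := by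
    rw [← J.sum_add_sum_compl, add_sub_cancel_left]
  have hN := norm_sum_le_card_compl_of_sum_eq_zero hA htr J
  rw [hcompl] at hN
  have hcoef : 0 ≤ 1 / (J.card : ℝ) - 1 / d := sub_nonneg.2 (one_div_le_one_div_of_le hk hkd)
  rw [show ∀ S N T : ℝ, 1 / (J.card : ℝ) * S - 1 / (J.card : ℝ) ^ 2 * N - 1 / d * T
      = (1 / (J.card : ℝ) - 1 / d) * S - N / (J.card : ℝ) ^ 2 - (T - S) / d by intros; ring, hTS]
  refine abs_sub_sub_le_add_add ⟨by positivity, mul_le_mul_of_nonneg_left hS hcoef⟩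
    ⟨by positivity, by gcongr⟩ ⟨by positivity, ?_⟩
  gcongr
  simpa [hcompl] using Jᶜ.sum_norm_sq_le_card hA
end

section
/- Let A_1,...,A_d be complex numbers with |A_j| ≤ 1, ∑_j A_j = 0, and suppose J ⊆ {1,...,d} satisfies |J| ≥ d(1 - ε) with 0 < ε ≤ 1/2. Then |ΔA_J - ΔA| ≤ C·ε for an absolute constant C (e.g. C = 8), where ΔA = (1/d)∑_j|A_j|² and ΔA_J = (1/|J|)∑_{j∈J}|A_j|² - (1/|J|²)|∑_{j∈J}A_j|². -/
set_option maxHeartbeats 2000000 in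
/-- Lemma 1 (quantified): if the microcanonical window `J` contains all but an
`ε`-fraction of eigenstates, then `|ΔA_J - ΔA| ≤ 8ε`. -/
theorem stmt_2 (d : ℕ) (A : Fin d → ℂ) (hA : ∀ j, ‖A j‖ ≤ 1)
    (htr : ∑ j, A j = 0) (J : Finset (Fin d)) (ε : ℝ) (hε0 : 0 < ε) (hε : ε ≤ 1 / 2)
    (hJ : (d : ℝ) * (1 - ε) ≤ J.card) :
    |((1 / (J.card : ℝ)) * ∑ j ∈ J, ‖A j‖ ^ 2
        - (1 / (J.card : ℝ) ^ 2) * ‖∑ j ∈ J, A j‖ ^ 2)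
      - (1 / (d : ℝ)) * ∑ j, ‖A j‖ ^ 2|
      ≤ 8 * ε := by
  rcases Nat.eq_zero_or_pos d with hd | hd
  · subst hd
    have hJ0 : J = ∅ := Finset.eq_empty_of_isEmpty J
    simp [hJ0]
    linarith
  set S : ℝ := ∑ j ∈ J, ‖A j‖ ^ 2 with hSdef
  set T : ℝ := ∑ j, ‖A j‖ ^ 2 with hTdef
  set n : ℝ := ‖∑ j ∈ J, A j‖ with hndef
  have hdd : (0:ℝ) < d := by exact_mod_cast hd
  have hε1 : ε < 1 := by linarith
  have hm0 : (0:ℝ) < J.card := lt_of_lt_of_le (by nlinarith) hJ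
  have hmd : (J.card : ℝ) ≤ d := by
    have := Finset.card_le_univ J
    have h2 : J.card ≤ d := by simpa using this
    exact_mod_cast h2
  -- each term at most 1
  have hterm : ∀ j : Fin d, ‖A j‖ ^ 2 ≤ 1 := by
    intro j
    nlinarith [hA j, norm_nonneg (A j)]
  have hS0 : 0 ≤ S := Finset.sum_nonneg (fun j _ => by positivity)
  have hS_le : S ≤ (J.card : ℝ) := by
    calc S ≤ ∑ _j ∈ J, (1:ℝ) := Finset.sum_le_sum (fun j _ => hterm j)
    _ = (J.card : ℝ) := by simp
  -- split over complement
  have hsplit : S + ∑ j ∈ Jᶜ, ‖A j‖ ^ 2 = T := by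
    rw [hSdef, hTdef]
    exact Finset.sum_add_sum_compl J _
  have hcardc : ((Jᶜ : Finset (Fin d)).card : ℝ) = d - J.card := by
    have h1 : (Jᶜ : Finset (Fin d)).card = d - J.card := by
      simpa using Finset.card_compl J
    have h2 : J.card ≤ d := by exact_mod_cast hmd
    rw [h1, Nat.cast_sub h2]
  have hdm : (d : ℝ) - J.card ≤ ε * d := by nlinarith
  have hTS0 : 0 ≤ T - S := by
    have : (0:ℝ) ≤ ∑ j ∈ Jᶜ, ‖A j‖ ^ 2 := Finset.sum_nonneg (fun j _ => by positivity)
    linarith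
  have hTSle : T - S ≤ ε * d := by
    have h1 : ∑ j ∈ Jᶜ, ‖A j‖ ^ 2 ≤ ∑ _j ∈ Jᶜ, (1:ℝ) :=
      Finset.sum_le_sum (fun j _ => hterm j)
    have h2 : (∑ _j ∈ Jᶜ, (1:ℝ)) = ((Jᶜ : Finset (Fin d)).card : ℝ) := by simp
    rw [h2, hcardc] at h1
    linarith
  -- norm bound
  have hn0 : 0 ≤ n := norm_nonneg _
  have hnle : n ≤ ε * d := by
    have h1 : (∑ j ∈ J, A j) + ∑ j ∈ Jᶜ, A j = 0 := by
      rw [Finset.sum_add_sum_compl J A]; exact htr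
    have h2 : (∑ j ∈ J, A j) = -∑ j ∈ Jᶜ, A j := by linear_combination h1
    have h3 : n = ‖∑ j ∈ Jᶜ, A j‖ := by rw [hndef, h2, norm_neg]
    have h4 : ‖∑ j ∈ Jᶜ, A j‖ ≤ ∑ j ∈ Jᶜ, ‖A j‖ := norm_sum_le _ _
    have h5 : ∑ j ∈ Jᶜ, ‖A j‖ ≤ ∑ _j ∈ Jᶜ, (1:ℝ) := Finset.sum_le_sum (fun j _ => hA j)
    have h6 : (∑ _j ∈ Jᶜ, (1:ℝ)) = ((Jᶜ : Finset (Fin d)).card : ℝ) := by simp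
    rw [h3]
    calc ‖∑ j ∈ Jᶜ, A j‖ ≤ ((Jᶜ : Finset (Fin d)).card : ℝ) := by rw [← h6]; linarith
    _ = (d:ℝ) - J.card := hcardc
    _ ≤ ε * d := hdm
  set m : ℝ := (J.card : ℝ) with hmdef
  clear_value S T n
  clear hSdef hTdef hndef htr hA hterm hsplit hcardc A
  -- key1 : |S/m - T/d| ≤ ε
  have hprod : |S * d - T * m| ≤ ε * (m * d) := by
    rw [abs_le]
    constructor
    · nlinarith
    · nlinarith
  have key1 : |S / m - T / d| ≤ ε := by
    have heq : S / m - T / d = (S * d - T * m) / (m * d) := by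
      field_simp
    rw [heq, abs_div, abs_of_pos (by positivity : (0:ℝ) < m * d), div_le_iff₀ (by positivity)]
    linarith [hprod]
  -- key2 : n^2/m^2 ≤ 2ε
  have hm_half : (d:ℝ) / 2 ≤ m := by nlinarith
  have hm2 : (d:ℝ) ^ 2 / 4 ≤ m ^ 2 := by nlinarith [sq_nonneg (m - d/2)]
  have hn2 : n ^ 2 ≤ (ε * d) ^ 2 := by nlinarith
  have key2 : n ^ 2 / m ^ 2 ≤ 2 * ε := by
    rw [div_le_iff₀ (by positivity)]
    have h7 : 0 ≤ ε * (m ^ 2 - (d:ℝ) ^ 2 / 4) := mul_nonneg hε0.le (by linarith)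
    have h8 : 0 ≤ (ε * (d:ℝ) ^ 2) * (1 / 2 - ε) := mul_nonneg (by positivity) (by linarith)
    have hn2' : n ^ 2 ≤ ε ^ 2 * (d:ℝ) ^ 2 := by rw [mul_pow] at hn2; exact hn2
    linarith
  have key2' : (0:ℝ) ≤ n ^ 2 / m ^ 2 := by positivity
  have h1 := abs_le.mp key1
  have heq2 : (1 / m) * S - (1 / m ^ 2) * n ^ 2 - (1 / (d:ℝ)) * T
      = (S / m - T / d) - n ^ 2 / m ^ 2 := by ring
  rw [heq2, abs_le]
  constructor
  · linarith [h1.1]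
  · linarith [h1.2]
end

section
/- Let A_1,...,A_d ∈ ℂ with |A_j| ≤ 1, let J, J' be nonempty subsets of {1,...,d} with J' ⊆ J, and for each j let K_j ⊆ {1,...,d} be nonempty with j ∈ K_j. Suppose for all j ∈ J' we have |K_j| ≥ d(1-ε) with 0 ≤ ε ≤ 1/2, |J| ≥ d(1-ε), and |J'| ≥ d(1-ε). Then |Δ'A_J - ΔA| ≤ C·ε for an absolute constant C, where ΔA = (1/d)∑_{j=1}^d|A_j|² and Δ'A_J = (1/|J|)∑_{j∈J}|A_j - (1/|K_j|)∑_{k∈K_j}A_k|². -/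
set_option maxHeartbeats 1600000


/-- Quantitative abstract version of Eq. (def2) of Lemma 1: when the microcanonical
window `J`, the inner window `J'`, and each local window `K_j` (for `j ∈ J'`) contain
all but an `ε`-fraction of indices, the locally-centered EEV fluctuation `Δ'A_J`
agrees with the global variance `ΔA` up to `C·ε` for an absolute constant `C`. -/
theorem stmt_15 :
    ∃ C : ℝ, 0 < C ∧
      ∀ (d : ℕ) (A : Fin d → ℂ), (∀ j, ‖A j‖ ≤ 1) → (∑ j, A j = 0) →
      ∀ (J J' : Finset (Fin d)), J.Nonempty → J'.Nonempty → J' ⊆ J →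
      ∀ (K : Fin d → Finset (Fin d)), (∀ j, j ∈ K j) →
      ∀ ε : ℝ, 0 ≤ ε → ε ≤ 1 / 2 →
        (∀ j ∈ J', (d : ℝ) * (1 - ε) ≤ (K j).card) →
        (d : ℝ) * (1 - ε) ≤ J.card → (d : ℝ) * (1 - ε) ≤ J'.card →
        |(1 / (J.card : ℝ)) * ∑ j ∈ J,
              ‖A j - (1 / ((K j).card : ℂ)) * ∑ k ∈ K j, A k‖ ^ 2
            - (1 / (d : ℝ)) * ∑ j, ‖A j‖ ^ 2|
          ≤ C * ε := by
  refine ⟨100, by norm_num, ?_⟩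
  intro d A hA hsum J J' hJne hJ'ne hJ'J K hK ε hε0 hε2 hKcard hJcard hJ'card
  obtain ⟨j0, hj0⟩ := hJne
  have hd : 0 < d := j0.pos
  have hdR : (0:ℝ) < d := by exact_mod_cast hd
  have h1ε : (1:ℝ)/2 ≤ 1 - ε := by linarith
  have hd2J : (d:ℝ)/2 ≤ J.card := le_trans (by nlinarith) hJcard
  have hJc0 : (0:ℝ) < J.card := by nlinarith
  set m : Fin d → ℂ := fun j => (1 / ((K j).card : ℂ)) * ∑ k ∈ K j, A k with hm
  have hKc : ∀ j, (0:ℝ) < ((K j).card : ℝ) := by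
    intro j
    have := Finset.card_pos.mpr ⟨j, hK j⟩
    exact_mod_cast this
  have hnormm : ∀ j, ‖m j‖ = ‖∑ k ∈ K j, A k‖ / ((K j).card : ℝ) := by
    intro j
    rw [hm]
    simp only [norm_mul, norm_div, norm_one, Complex.norm_natCast]
    ring
  have hsumK : ∀ (s : Finset (Fin d)), ‖∑ k ∈ s, A k‖ ≤ (s.card : ℝ) := by
    intro s
    calc ‖∑ k ∈ s, A k‖ ≤ ∑ k ∈ s, ‖A k‖ := norm_sum_le _ _
    _ ≤ ∑ _k ∈ s, (1:ℝ) := Finset.sum_le_sum fun k _ => hA k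
    _ = (s.card : ℝ) := by simp
  have hm1 : ∀ j, ‖m j‖ ≤ 1 := by
    intro j
    rw [hnormm, div_le_one (hKc j)]
    exact hsumK _
  have hmsmall : ∀ j ∈ J', ‖m j‖ ≤ 2 * ε := by
    intro j hj
    have hcompl : ∑ k ∈ K j, A k = - ∑ k ∈ (K j)ᶜ, A k := by
      have h := Finset.sum_add_sum_compl (K j) A
      rw [hsum] at h
      linear_combination h
    have hcc : (((K j)ᶜ.card : ℝ)) ≤ d * ε := by
      have h := Finset.card_add_card_compl (K j)
      simp only [Fintype.card_fin] at h
      have hcast : ((K j)ᶜ.card : ℝ) = (d : ℝ) - ((K j).card : ℝ) := by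
        have : ((K j).card : ℝ) + ((K j)ᶜ.card : ℝ) = (d : ℝ) := by exact_mod_cast h
        linarith
      have := hKcard j hj
      nlinarith
    have hnum : ‖∑ k ∈ K j, A k‖ ≤ d * ε := by
      rw [hcompl, norm_neg]
      exact le_trans (hsumK _) hcc
    have hcge : (d:ℝ)/2 ≤ ((K j).card : ℝ) := le_trans (by nlinarith) (hKcard j hj)
    rw [hnormm]
    calc ‖∑ k ∈ K j, A k‖ / ((K j).card : ℝ) ≤ (d * ε) / ((d:ℝ)/2) :=
          div_le_div₀ (by positivity) hnum (by positivity) hcge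
    _ = 2 * ε := by field_simp
  have hfbound : ∀ j, |‖A j - m j‖^2 - ‖A j‖^2| ≤ 3 * ‖m j‖ := by
    intro j
    have h1 : |‖A j - m j‖ - ‖A j‖| ≤ ‖m j‖ := by
      have := abs_norm_sub_norm_le (A j - m j) (A j)
      simpa using this
    have h2 : ‖A j - m j‖ ≤ 2 := by
      calc ‖A j - m j‖ ≤ ‖A j‖ + ‖m j‖ := norm_sub_le _ _
      _ ≤ 2 := by linarith [hA j, hm1 j]
    have h3 := hA j
    have h4 : (0:ℝ) ≤ ‖A j‖ := norm_nonneg _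
    have h5 : (0:ℝ) ≤ ‖A j - m j‖ := norm_nonneg _
    rw [abs_le] at h1 ⊢
    constructor <;> nlinarith [h1.1, h1.2]
  -- split into two differences
  set Z : ℝ := (1 / (J.card : ℝ)) * ∑ j ∈ J, ‖A j‖^2 with hZ
  set X : ℝ := (1 / (J.card : ℝ)) * ∑ j ∈ J, ‖A j - m j‖^2 with hX
  set Y : ℝ := (1 / (d : ℝ)) * ∑ j, ‖A j‖^2 with hY
  have step1 : |X - Z| ≤ 12 * ε := by
    have hXZ : X - Z = (1 / (J.card : ℝ)) * ∑ j ∈ J, (‖A j - m j‖^2 - ‖A j‖^2) := by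
      rw [hX, hZ, Finset.sum_sub_distrib]
      ring
    rw [hXZ, abs_mul, abs_of_pos (by positivity : (0:ℝ) < 1 / (J.card : ℝ))]
    have habs : |∑ j ∈ J, (‖A j - m j‖^2 - ‖A j‖^2)| ≤
        ∑ j ∈ J, |‖A j - m j‖^2 - ‖A j‖^2| := Finset.abs_sum_le_sum_abs _ _
    have hsplit : ∑ j ∈ J, |‖A j - m j‖^2 - ‖A j‖^2| =
        ∑ j ∈ J \ J', |‖A j - m j‖^2 - ‖A j‖^2|
          + ∑ j ∈ J', |‖A j - m j‖^2 - ‖A j‖^2| := (Finset.sum_sdiff hJ'J).symm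
    have hb1 : ∑ j ∈ J', |‖A j - m j‖^2 - ‖A j‖^2| ≤ (J'.card : ℝ) * (6 * ε) := by
      have := Finset.sum_le_card_nsmul J' (fun j => |‖A j - m j‖^2 - ‖A j‖^2|) (6*ε)
        (fun j hj => le_trans (hfbound j) (by linarith [hmsmall j hj]))
      simpa [nsmul_eq_mul] using this
    have hb2 : ∑ j ∈ J \ J', |‖A j - m j‖^2 - ‖A j‖^2| ≤ ((J \ J').card : ℝ) * 3 := by
      have := Finset.sum_le_card_nsmul (J \ J') (fun j => |‖A j - m j‖^2 - ‖A j‖^2|) 3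
        (fun j _ => le_trans (hfbound j) (by linarith [hm1 j]))
      simpa [nsmul_eq_mul] using this
    have hcard1 : (J'.card : ℝ) ≤ (J.card : ℝ) := by
      exact_mod_cast Finset.card_le_card hJ'J
    have hJd : (J.card : ℝ) ≤ (d : ℝ) := by
      have := Finset.card_le_card (Finset.subset_univ J)
      simpa using (by exact_mod_cast this : (J.card : ℝ) ≤ ((Finset.univ : Finset (Fin d)).card : ℝ))
    have hcard2 : ((J \ J').card : ℝ) ≤ (d : ℝ) * ε := by
      have h := Finset.card_sdiff_of_subset hJ'J
      have hcast : ((J \ J').card : ℝ) = (J.card : ℝ) - (J'.card : ℝ) := by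
        rw [h]
        have := Finset.card_le_card hJ'J
        push_cast [Nat.cast_sub this]
        ring
      nlinarith
    have htot : ∑ j ∈ J, |‖A j - m j‖^2 - ‖A j‖^2| ≤ 12 * ε * (J.card : ℝ) := by
      have e1 : (J'.card : ℝ) * (6 * ε) ≤ (J.card : ℝ) * (6 * ε) :=
        mul_le_mul_of_nonneg_right hcard1 (by positivity)
      have e2 : ((J \ J').card : ℝ) * 3 ≤ ((d:ℝ) * ε) * 3 :=
        mul_le_mul_of_nonneg_right hcard2 (by norm_num)
      have e3' : (d:ℝ)/2 * ε ≤ (J.card : ℝ) * ε := mul_le_mul_of_nonneg_right hd2J hε0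
      have e3 : ((d:ℝ) * ε) * 3 ≤ (J.card : ℝ) * (6 * ε) := by linarith
      rw [hsplit]
      linarith
    calc (1 / (J.card : ℝ)) * |∑ j ∈ J, (‖A j - m j‖^2 - ‖A j‖^2)|
        ≤ (1 / (J.card : ℝ)) * (12 * ε * (J.card : ℝ)) := by
          apply mul_le_mul_of_nonneg_left (le_trans habs htot) (by positivity)
      _ = 12 * ε := by field_simp
  have step2 : |Z - Y| ≤ 2 * ε := by
    set SJ : ℝ := ∑ j ∈ J, ‖A j‖^2 with hSJ
    set S : ℝ := ∑ j, ‖A j‖^2 with hS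
    have hSJ0 : 0 ≤ SJ := Finset.sum_nonneg fun j _ => by positivity
    have hSJle : SJ ≤ (J.card : ℝ) := by
      have := Finset.sum_le_card_nsmul J (fun j => ‖A j‖^2) 1
        (fun j _ => by simpa using pow_le_pow_left₀ (norm_nonneg (A j)) (hA j) 2)
      simpa [nsmul_eq_mul] using this
    have hSJS : SJ ≤ S := Finset.sum_le_sum_of_subset_of_nonneg (Finset.subset_univ J)
      (fun j _ _ => by positivity)
    have hJd : (J.card : ℝ) ≤ (d : ℝ) := by
      have := Finset.card_le_card (Finset.subset_univ J)
      simpa using (by exact_mod_cast this : (J.card : ℝ) ≤ ((Finset.univ : Finset (Fin d)).card : ℝ))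
    have hSsub : S - SJ ≤ (d : ℝ) - (J.card : ℝ) := by
      have hdecomp : S = SJ + ∑ j ∈ Jᶜ, ‖A j‖^2 := by
        rw [hS, hSJ, ← Finset.sum_add_sum_compl J]
      have hcompl : ∑ j ∈ Jᶜ, ‖A j‖^2 ≤ ((Jᶜ).card : ℝ) := by
        have := Finset.sum_le_card_nsmul (Jᶜ) (fun j => ‖A j‖^2) 1
          (fun j _ => by simpa using pow_le_pow_left₀ (norm_nonneg (A j)) (hA j) 2)
        simpa [nsmul_eq_mul] using this
      have hcc : ((Jᶜ).card : ℝ) = (d : ℝ) - (J.card : ℝ) := by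
        have h := Finset.card_add_card_compl J
        simp only [Fintype.card_fin] at h
        have : (J.card : ℝ) + ((Jᶜ).card : ℝ) = (d : ℝ) := by exact_mod_cast h
        linarith
      linarith
    have hZY : Z - Y = (SJ * (d:ℝ) - S * (J.card : ℝ)) / ((J.card : ℝ) * (d : ℝ)) := by
      rw [hZ, hY]
      field_simp
    rw [hZY, abs_div, abs_of_pos (by positivity : (0:ℝ) < (J.card : ℝ) * (d : ℝ)),
      div_le_iff₀ (by positivity)]
    rw [abs_le]
    constructor <;> nlinarith
  calc |X - Y| ≤ |X - Z| + |Z - Y| := abs_sub_le _ _ _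
    _ ≤ 12 * ε + 2 * ε := add_le_add step1 step2
    _ ≤ 100 * ε := by linarith
end
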